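/- arXiv:math/9901053 — 6 statements merged into one kernel-verified Lean document; each statement's English description precedes it below -/
import Mathlib

section
/- Let A be the algebra over ℂ(q) generated by x, y with relation x y = q^b y x for some integer b, where the Cartan matrix entry a satisfies b = d·a. Then x and y satisfy the quantum Serre relation: ∑_{k=0}^{1-a} (-1)^k [1-a choose k]_{q^d} x^{1-a-k} y x^k = 0. -/
/-!
Moving `y` to the right through `x ^ k` costs the scalar `q ^ (-b k) = p ^ (k (n - 1))`,
where `p = q ^ d` and `n = 1 - a`, so every term of the Serre sum is a multiple of `x ^ n * y`
and the sum equals `S n • (x ^ n * y)` with `S n = ∑ₖ (-1) ^ k [n choose k]_p p ^ (k (n - 1))`.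
The `p`-Pascal rule gives `S (n + 1) = (1 - p ^ (2 n)) * S n`, and the factor at `n = 0` vanishes.
-/

/-- The symmetric p-binomial coefficient
`[n choose k]_p = ∏_{j=1}^{k} (p^{n-j+1}-p^{-(n-j+1)})/(p^j - p^{-j})`. -/
noncomputable def qbinom (p : ℂ) (n k : ℕ) : ℂ :=
  ∏ j ∈ Finset.range k,
    (p ^ ((n : ℤ) - j) - p ^ (-((n : ℤ) - j))) /
      (p ^ ((j : ℤ) + 1) - p ^ (-((j : ℤ) + 1)))

open Finset

/-- `(p - p⁻¹) [m]_p`; `qbinom p n k` is `∏_{j<k} qdiff p (n - j) / qdiff p (j + 1)` by definition. -/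
noncomputable def qdiff (p : ℂ) (m : ℤ) : ℂ :=
  p ^ m - p ^ (-m)

lemma qdiff_add {p : ℂ} (hp : p ≠ 0) (s t : ℤ) :
    qdiff p (s + t) = p ^ (-s) * qdiff p t + p ^ t * qdiff p s := by
  simp only [qdiff, zpow_add₀ hp, zpow_neg]
  field_simp
  ring

lemma qdiff_natCast_ne_zero {p : ℂ} (hp : p ≠ 0) {m : ℕ} (h : p ^ (2 * m) ≠ 1) :
    qdiff p m ≠ 0 := by
  intro h0
  rw [qdiff, sub_eq_zero, zpow_neg, zpow_natCast] at h0
  apply h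
  rw [two_mul, pow_add]
  nth_rewrite 2 [h0]
  exact mul_inv_cancel₀ (pow_ne_zero _ hp)

lemma qbinom_zero_right (p : ℂ) (n : ℕ) : qbinom p n 0 = 1 :=
  prod_range_zero _

lemma qbinom_succ_right (p : ℂ) (n k : ℕ) :
    qbinom p n (k + 1) = qbinom p n k * (qdiff p (n - k) / qdiff p (k + 1)) :=
  prod_range_succ _ _

lemma qbinom_self_succ (p : ℂ) (n : ℕ) : qbinom p n (n + 1) = 0 :=
  prod_eq_zero (self_mem_range_succ n) (by simp)

lemma qbinom_succ_succ (p : ℂ) (n k : ℕ) :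
    qbinom p (n + 1) (k + 1) = qbinom p n k * (qdiff p (n + 1) / qdiff p (k + 1)) := by
  induction k with
  | zero => simp [qbinom_succ_right, qbinom_zero_right]
  | succ k ih =>
    rw [qbinom_succ_right, ih, qbinom_succ_right]
    push_cast
    rw [show (n : ℤ) + 1 - (k + 1) = n - k by ring]
    ring

lemma qbinom_pascal {p : ℂ} (hp : p ≠ 0) {k : ℕ} (hk : qdiff p (k + 1) ≠ 0) (n : ℕ) :
    qbinom p (n + 1) (k + 1) =
      p ^ (-((k : ℤ) + 1)) * qbinom p n (k + 1) + p ^ ((n : ℤ) - k) * qbinom p n k := by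
  have hsplit := qdiff_add hp ((k : ℤ) + 1) ((n : ℤ) - k)
  rw [show (k : ℤ) + 1 + (n - k) = n + 1 by ring] at hsplit
  rw [qbinom_succ_succ, qbinom_succ_right, hsplit]
  field_simp

noncomputable def altQBinomSum (p : ℂ) (n : ℕ) : ℂ :=
  ∑ k ∈ range (n + 1), (-1) ^ k * qbinom p n k * p ^ ((k : ℤ) * ((n : ℤ) - 1))

lemma altQBinomSum_succ {p : ℂ} (hp : p ≠ 0) (hden : ∀ k : ℕ, qdiff p (k + 1) ≠ 0) (n : ℕ) :
    altQBinomSum p (n + 1) = (1 - p ^ (2 * n)) * altQBinomSum p n := by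
  set F : ℕ → ℂ := fun k => (-1) ^ k * qbinom p n k * p ^ ((k : ℤ) * ((n : ℤ) - 1))
  have hterm : ∀ k : ℕ, (-1) ^ (k + 1) * qbinom p (n + 1) (k + 1) *
      p ^ (((k + 1 : ℕ) : ℤ) * (((n + 1 : ℕ) : ℤ) - 1)) = F (k + 1) - p ^ (2 * n) * F k := by
    intro k
    simp only [F, qbinom_pascal hp (hden k)]
    push_cast
    have e1 : p ^ (((k : ℤ) + 1) * ((n : ℤ) + 1 - 1)) * p ^ (-((k : ℤ) + 1)) =
        p ^ (((k : ℤ) + 1) * ((n : ℤ) - 1)) := by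
      rw [← zpow_add₀ hp]; ring_nf
    have e2 : p ^ (((k : ℤ) + 1) * ((n : ℤ) + 1 - 1)) * p ^ ((n : ℤ) - k) =
        p ^ (2 * n) * p ^ ((k : ℤ) * ((n : ℤ) - 1)) := by
      rw [← zpow_natCast, ← zpow_add₀ hp, ← zpow_add₀ hp]; push_cast; ring_nf
    linear_combination ((-1) ^ (k + 1) * qbinom p n (k + 1)) * e1 +
      ((-1) ^ (k + 1) * qbinom p n k) * e2
  have hsum : altQBinomSum p n = ∑ k ∈ range (n + 1), F k := rfl
  rw [altQBinomSum, sum_range_succ', sum_congr rfl fun k _ => hterm k, sum_sub_distrib,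
    ← mul_sum, ← hsum]
  have hshift : ∑ k ∈ range (n + 1), F (k + 1) + 1 = altQBinomSum p n := by
    have hF0 : F 0 = 1 := by simp [F, qbinom_zero_right]
    rw [← hF0, ← sum_range_succ', sum_range_succ, hsum]
    simp [F, qbinom_self_succ]
  simp only [qbinom_zero_right, Nat.cast_zero, zero_mul, zpow_zero]
  linear_combination hshift

lemma altQBinomSum_succ_eq_zero {p : ℂ} (hp : p ≠ 0) (hden : ∀ k : ℕ, qdiff p (k + 1) ≠ 0)
    (n : ℕ) : altQBinomSum p (n + 1) = 0 := by
  induction n with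
  | zero => simp [altQBinomSum_succ hp hden 0]
  | succ n ih => rw [altQBinomSum_succ hp hden, ih, mul_zero]

section QCommute

variable {R A : Type*} [CommSemiring R] [Semiring A] [Algebra R A] {x y : A} {c : R}

lemma mul_pow_eq_smul_pow_mul (h : y * x = c • (x * y)) (k : ℕ) :
    y * x ^ k = c ^ k • (x ^ k * y) := by
  induction k with
  | zero => simp
  | succ k ih =>
    rw [pow_succ, ← mul_assoc, ih, smul_mul_assoc, mul_assoc, h, mul_smul_comm, smul_smul,
      ← mul_assoc, ← pow_succ, pow_succ]

lemma pow_sub_mul_mul_pow_eq_smul (h : y * x = c • (x * y)) {n k : ℕ} (hk : k ≤ n) :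
    x ^ (n - k) * y * x ^ k = c ^ k • (x ^ n * y) := by
  rw [mul_assoc, mul_pow_eq_smul_pow_mul h, mul_smul_comm, ← mul_assoc, ← pow_add,
    Nat.sub_add_cancel hk]

end QCommute

theorem statement1_general (A : Type*) [Ring A] [Algebra ℂ A]
    (q : ℂ) (hq : q ≠ 0)
    (d : ℕ)
    (hroot : ∀ n : ℕ, 1 ≤ n → (q ^ d) ^ (2 * n) ≠ 1)
    (a : ℤ) (ha : a ≤ 0) (b : ℤ) (hb : b = d * a)
    (x y : A) (hxy : x * y = (q ^ b) • (y * x)) :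
    ∑ k ∈ Finset.range ((1 - a).toNat + 1),
      ((-1 : ℂ) ^ k * qbinom (q ^ d) (1 - a).toNat k) •
        (x ^ ((1 - a).toNat - k) * y * x ^ k) = 0 := by
  obtain ⟨m, hm⟩ : ∃ m : ℕ, (1 - a).toNat = m + 1 := ⟨(-a).toNat, by omega⟩
  have hp : q ^ d ≠ 0 := pow_ne_zero d hq
  have hyx : y * x = q ^ (-b) • (x * y) := by
    rw [hxy, smul_smul, ← zpow_add₀ hq, neg_add_cancel, zpow_zero, one_smul]
  have hscalar : ∀ k : ℕ, (q ^ (-b)) ^ k = (q ^ d) ^ ((k : ℤ) * (((m + 1 : ℕ) : ℤ) - 1)) := by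
    intro k
    rw [← zpow_natCast, ← zpow_natCast q d, ← zpow_mul, ← zpow_mul, hb]
    congr 1
    push_cast
    have : (m : ℤ) = -a := by omega
    rw [this]
    ring
  calc _ = ∑ k ∈ range (m + 2), ((-1 : ℂ) ^ k * qbinom (q ^ d) (m + 1) k *
        (q ^ d) ^ ((k : ℤ) * (((m + 1 : ℕ) : ℤ) - 1))) • (x ^ (m + 1) * y) := by
        rw [hm]
        refine sum_congr rfl fun k hk => ?_
        rw [pow_sub_mul_mul_pow_eq_smul hyx (Nat.lt_succ_iff.mp (mem_range.mp hk)), smul_smul,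
          hscalar]
    _ = altQBinomSum (q ^ d) (m + 1) • (x ^ (m + 1) * y) := by rw [altQBinomSum, sum_smul]
    _ = 0 := by
        rw [altQBinomSum_succ_eq_zero hp
          (fun k => qdiff_natCast_ne_zero hp (hroot (k + 1) (Nat.succ_pos k))), zero_smul]

/-- Proposition 3.1: in an algebra where `x y = q^{b} y x` with `b = d·a`
(`a ≤ 0` an off-diagonal Cartan matrix entry, `d ∈ {1,2,3}`), the elements
`x`, `y` satisfy the quantum Serre relation
`∑_{k=0}^{1-a} (-1)^k [1-a choose k]_{q^d} x^{1-a-k} y x^k = 0`. -/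
theorem statement1 (A : Type*) [Ring A] [Algebra ℂ A]
    (q : ℂ) (hq : q ≠ 0)
    (d : ℕ) (hd : d = 1 ∨ d = 2 ∨ d = 3)
    (hroot : ∀ n : ℕ, 1 ≤ n → (q ^ d) ^ (2 * n) ≠ 1)
    (a : ℤ) (ha : a ≤ 0) (b : ℤ) (hb : b = d * a)
    (x y : A) (hxy : x * y = (q ^ b) • (y * x)) :
    ∑ k ∈ Finset.range ((1 - a).toNat + 1),
      ((-1 : ℂ) ^ k * qbinom (q ^ d) (1 - a).toNat k) •
        (x ^ ((1 - a).toNat - k) * y * x ^ k) = 0 :=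
  statement1_general A q hq d hroot a ha b hb x y hxy
end

section
/- If Y and Y' are central elements of U(g), and D_Y, D_{Y'}, D_{YY'} are the unique differential operators on the formal torus H such that (L(Z)φ)|_h = D_Z φ|_h for every Whittaker function φ (Z = Y, Y', YY'), then D_{YY'} = D_Y D_{Y'}. In particular, the operators D_Y for central Y commute pairwise. -/
/-!
Since `Y'` is central, `L(Y')` maps Whittaker functions to Whittaker functions, so for Whittaker `φ`
`(L(YY')φ)|_h = (L(Y)L(Y')φ)|_h = D_Y (L(Y')φ)|_h = D_Y D_{Y'} φ|_h`. Every function on the torus is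
the restriction of a Whittaker function, so this determines `D_{YY'} = D_Y D_{Y'}`. Exchanging the
roles of `Y` and `Y'`, and using `YY' = Y'Y`, gives `D_Y D_{Y'} = D_{Y'} D_Y`.
-/

section RadialPart

variable {R A AH : Type*} [CommSemiring R] [AddCommMonoid A] [Module R A]
  [AddCommMonoid AH] [Module R AH]

/-- The paper's `D_Y` is a radial part of `L(Y)`, with `res` the restriction to `h` and `Wh` the
Whittaker condition. -/
def IsRadialPart (res : A → AH) (Wh : A → Prop) (T : Module.End R A) (D : Module.End R AH) :
    Prop :=
  ∀ φ, Wh φ → res (T φ) = D (res φ)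

variable {res : A → AH} {Wh : A → Prop} {T S : Module.End R A} {D E : Module.End R AH}

theorem IsRadialPart.mul (hT : IsRadialPart res Wh T D) (hS : IsRadialPart res Wh S E)
    (hS_stab : ∀ φ, Wh φ → Wh (S φ)) : IsRadialPart res Wh (T * S) (D * E) := by
  intro φ hφ
  rw [Module.End.mul_apply, hT _ (hS_stab φ hφ), hS φ hφ, Module.End.mul_apply]

theorem IsRadialPart.unique (hsurj : ∀ ψ, ∃ φ, Wh φ ∧ res φ = ψ)
    (hD : IsRadialPart res Wh T D) (hE : IsRadialPart res Wh T E) : D = E := by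
  ext ψ
  obtain ⟨φ, hφ, rfl⟩ := hsurj ψ
  rw [← hD φ hφ, hE φ hφ]

end RadialPart

/-- Proposition 1.3(ii): if `Y, Y'` are central in `U(g)` and `D_Y, D_{Y'},
D_{YY'}` are the (unique) operators on functions on the formal torus such that
`(L(Z)φ)|_h = D_Z (φ|_h)` for every Whittaker function `φ`, then
`D_{YY'} = D_Y D_{Y'}`; in particular the `D_Y` for central `Y` commute.

Here `U` plays the role of `U(g)`, `A` of `A_g = U(g)*`, `AH` of the functions
on the torus `H`, `res : A → AH` of the restriction, `Wh` of the Whittaker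
condition (for fixed nondegenerate characters `χ±`); `hstab` records the key
point that `L(Z)` preserves Whittaker functions for central `Z`, and `hsurj`
the Frobenius-reciprocity identification of Whittaker functions with `AH`. -/
theorem statement5 (U A AH : Type*) [Ring U] [Algebra ℂ U]
    [AddCommGroup A] [Module ℂ A] [AddCommGroup AH] [Module ℂ AH]
    (L : U →ₐ[ℂ] Module.End ℂ A) (res : A →ₗ[ℂ] AH)
    (Wh : A → Prop)
    (hstab : ∀ Z : U, (∀ u, Z * u = u * Z) → ∀ φ, Wh φ → Wh (L Z φ))
    (hsurj : ∀ ψ : AH, ∃ φ, Wh φ ∧ res φ = ψ)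
    (Y Y' : U) (hY : ∀ u, Y * u = u * Y) (hY' : ∀ u, Y' * u = u * Y')
    (DY DY' DYY' : Module.End ℂ AH)
    (hDY : ∀ φ, Wh φ → res (L Y φ) = DY (res φ))
    (hDY' : ∀ φ, Wh φ → res (L Y' φ) = DY' (res φ))
    (hDYY' : ∀ φ, Wh φ → res (L (Y * Y') φ) = DYY' (res φ)) :
    DYY' = DY * DY' ∧ Commute DY DY' := by
  have hYY' : IsRadialPart res Wh (L (Y * Y')) (DY * DY') := by
    rw [map_mul]
    exact IsRadialPart.mul hDY hDY' (hstab Y' hY')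
  have hY'Y : IsRadialPart res Wh (L (Y * Y')) (DY' * DY) := by
    rw [← hY' Y, map_mul]
    exact IsRadialPart.mul hDY' hDY (hstab Y hY)
  have hprod : DYY' = DY * DY' := IsRadialPart.unique hsurj hDYY' hYY'
  exact ⟨hprod, IsRadialPart.unique hsurj hYY' hY'Y⟩
end

section
/- With 𝓜_1^K = ∑_{j=1}^N T_j² - (q-q^{-1})² ∑_{i=1}^N K^{δ_{iN}} e^{(h,α_i)} T_i T_{i+1}, where T_i shifts by ħω_i and q = e^ħ, on the hyperplane ∑ z_i = 0 one has lim_{ħ→0}(𝓜_1^K − N)/(q−q^{-1})² = −M_1^K, where M_1^K = −½Δ' + ∑_{i=1}^{N-1} e^{α_i(h)} + K e^{-θ(h)} is (up to conjugation and additive constant) the affine quantum Toda Hamiltonian. -/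
open Filter Topology

/-- Second partial derivative `∂_j² f` at `z`. -/
noncomputable def pd2 {N : ℕ} (j : Fin N) (f : (Fin N → ℂ) → ℂ) (z : Fin N → ℂ) : ℂ :=
  fderiv ℂ (fun w => fderiv ℂ f w (Pi.single j (1 : ℂ))) z (Pi.single j (1 : ℂ))

private lemma taylor2C (φ : ℂ → ℂ) (hφ : Differentiable ℂ φ) :
    Tendsto (fun s : ℂ => (φ s - φ 0 - s * deriv φ 0) / s ^ 2) (𝓝[≠] (0 : ℂ))
      (𝓝 (deriv (deriv φ) 0 / 2)) := by
  obtain ⟨p, hp⟩ := hφ.analyticAt 0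
  have h2 : HasFPowerSeriesAt ((Function.swap dslope 0)^[2] φ)
      (FormalMultilinearSeries.fslope^[2] p) 0 :=
    hp.has_fpower_series_iterate_dslope_fslope 2
  have hval : ((Function.swap dslope 0)^[2] φ) 0 = p.coeff 2 := by
    rw [show p.coeff 2 = (FormalMultilinearSeries.fslope^[2] p).coeff 0 by
      rw [FormalMultilinearSeries.coeff_iterate_fslope]]
    exact (h2.coeff_zero 1).symm
  have hcoeff : p.coeff 2 = deriv (deriv φ) 0 / 2 := by
    obtain ⟨r, hball⟩ := hp
    have h := hball.factorial_smul (1 : ℂ) 2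
    have h1 : iteratedFDeriv ℂ 2 φ 0 (fun _ => (1:ℂ)) = deriv (deriv φ) 0 := by
      rw [← iteratedDeriv_eq_iteratedFDeriv]
      simp [iteratedDeriv_succ, iteratedDeriv_zero]
    have h2' : p 2 (fun _ => (1:ℂ)) = p.coeff 2 := rfl
    rw [h2', h1] at h
    have h3 : (2:ℂ) * p.coeff 2 = deriv (deriv φ) 0 := by
      rw [← h]; simp [Nat.factorial]
    rw [← h3]; ring
  have hcont : Tendsto ((Function.swap dslope 0)^[2] φ) (𝓝[≠] (0:ℂ))
      (𝓝 (deriv (deriv φ) 0 / 2)) := by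
    have := h2.continuousAt.tendsto
    rw [hval, hcoeff] at this
    exact this.mono_left nhdsWithin_le_nhds
  refine hcont.congr' ?_
  filter_upwards [self_mem_nhdsWithin] with s hs
  have hs0 : s ≠ 0 := hs
  have hit : ((Function.swap dslope 0)^[2] φ) = dslope (dslope φ 0) 0 := by
    simp [Function.iterate_succ, Function.comp, Function.swap]
  rw [hit, dslope_of_ne _ hs0, slope_def_field, dslope_of_ne _ hs0, slope_def_field,
    dslope_same, sub_zero]
  rw [div_sub' hs0, div_div, sq]

/-- Formula (6.2), the quasiclassical limit of the q-deformed affine Toda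
Hamiltonian for `sl(N)`: with
`𝓜₁^K = ∑_j T_j² − (q−q⁻¹)² ∑_i K^{δ_{iN}} e^{(h,α_i)} T_i T_{i+1}`,
`q = e^ħ`, `T_j` the shift by `ħ ω_j` (so `T_j²` shifts `z_j` by `2ħ`),
acting on shift-invariant functions `f`, one has (pointwise)
`lim_{ħ→0} (𝓜₁^K f − N f)/(q−q⁻¹)² = −M₁^K f`, where
`−M₁^K = ½∑_j ∂_j² − ∑_{i=1}^{N} K^{δ_{iN}} e^{z_i − z_{i+1}}` is minus the
affine quantum Toda Hamiltonian (indices cyclic, the `i = N` term being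
`K e^{−θ(z)}`). -/
theorem statement11 (N : ℕ) [NeZero N] (K : ℂ)
    (f : (Fin N → ℂ) → ℂ) (hf : ContDiff ℂ 2 f)
    -- invariance under simultaneous shifts (functions on the torus of `sl_N`)
    (hinv : ∀ (t : ℂ) (z : Fin N → ℂ), f (fun j => z j + t) = f z)
    (z : Fin N → ℂ) :
    Tendsto (fun hbar : ℂ =>
      ((∑ j : Fin N, f (z + (2 * hbar) • (Pi.single j (1 : ℂ) : Fin N → ℂ)))
        - (Complex.exp hbar - Complex.exp (-hbar)) ^ 2 *
            ∑ i : Fin N, (if (i : ℕ) = N - 1 then K else 1) *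
              Complex.exp (z i - z (i + 1)) *
                f (z + hbar • (Pi.single i (1 : ℂ) : Fin N → ℂ)
                     + hbar • (Pi.single (i + 1) (1 : ℂ) : Fin N → ℂ))
        - N * f z) / (Complex.exp hbar - Complex.exp (-hbar)) ^ 2)
      (𝓝[≠] (0 : ℂ))
      (𝓝 ((1 / 2) * ∑ j : Fin N, pd2 j f z
        - (∑ i : Fin N, (if (i : ℕ) = N - 1 then K else 1) *
            Complex.exp (z i - z (i + 1))) * f z)) := by
  have hfd : Differentiable ℂ f := hf.differentiable (by norm_num)
  set v : Fin N → (Fin N → ℂ) := fun j => Pi.single j (1 : ℂ) with hv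
  have lineDeriv : ∀ (w : Fin N → ℂ) (g : (Fin N → ℂ) → ℂ), Differentiable ℂ g → ∀ s : ℂ,
      HasDerivAt (fun t : ℂ => g (z + t • w)) (fderiv ℂ g (z + s • w) w) s := by
    intro w g hg s
    have hline : HasDerivAt (fun t : ℂ => z + t • w) w s := by
      simpa using ((hasDerivAt_id s).smul_const w).const_add z
    exact (hg.differentiableAt.hasFDerivAt).comp_hasDerivAt s hline
  set φ : Fin N → ℂ → ℂ := fun j s => f (z + s • v j) with hφ
  have hder : ∀ j s, HasDerivAt (φ j) (fderiv ℂ f (z + s • v j) (v j)) s :=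
    fun j s => lineDeriv (v j) f hfd s
  have hφdiff : ∀ j, Differentiable ℂ (φ j) := fun j s => (hder j s).differentiableAt
  have hφ0 : ∀ j, φ j 0 = f z := by intro j; simp [hφ]
  set D : Fin N → ℂ := fun j => fderiv ℂ f z (v j) with hD
  have hderiv0 : ∀ j, deriv (φ j) 0 = D j := by
    intro j
    have := (hder j 0).deriv
    simpa using this
  have hDsum : ∑ j, D j = 0 := by
    have hsingle : ∑ j, v j = fun _ => (1:ℂ) := by
      have := Finset.univ_sum_single (fun _ : Fin N => (1:ℂ))
      simpa [hv] using this
    have hmap : ∑ j, D j = fderiv ℂ f z (fun _ => (1:ℂ)) := by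
      rw [← hsingle]
      simp [hD, map_sum]
    rw [hmap]
    have hconst : (fun t : ℂ => f (z + t • (fun _ => (1:ℂ)))) = fun _ => f z := by
      funext t
      have : (z + t • fun _ => (1:ℂ)) = fun j => z j + t := by
        funext j; simp
      rw [this, hinv]
    have h1 := lineDeriv (fun _ => (1:ℂ)) f hfd 0
    rw [hconst] at h1
    have h2 := h1.unique (hasDerivAt_const 0 (f z))
    simpa using h2
  have hf1 : ContDiff ℂ 1 (fderiv ℂ f) := hf.fderiv_right (by norm_num)
  have hg1 : ∀ j, Differentiable ℂ (fun w => fderiv ℂ f w (v j)) := by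
    intro j w
    exact (hf1.differentiable one_ne_zero w).clm_apply (differentiableAt_const _)
  have hdd : ∀ j, deriv (deriv (φ j)) 0 = pd2 j f z := by
    intro j
    have heq : deriv (φ j) = fun s => (fun w => fderiv ℂ f w (v j)) (z + s • v j) := by
      funext s; exact (hder j s).deriv
    have h2 := lineDeriv (v j) (fun w => fderiv ℂ f w (v j)) (hg1 j) 0
    rw [zero_smul, add_zero] at h2
    rw [heq]
    exact h2.deriv
  have hT1 : Tendsto (fun hbar : ℂ =>
      (Complex.exp hbar - Complex.exp (-hbar)) ^ 2 / hbar ^ 2) (𝓝[≠] (0:ℂ)) (𝓝 4) := by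
    have hE : HasDerivAt (fun hbar : ℂ => Complex.exp hbar - Complex.exp (-hbar)) 2 0 := by
      have h1 : HasDerivAt (fun hbar : ℂ => Complex.exp hbar) (Complex.exp 0) 0 :=
        Complex.hasDerivAt_exp 0
      have h2 : HasDerivAt (fun hbar : ℂ => Complex.exp (-hbar))
          (Complex.exp (-0) * (-1)) 0 :=
        (Complex.hasDerivAt_exp (-0)).comp 0 (hasDerivAt_neg 0)
      have h3 := h1.sub h2
      norm_num [Complex.exp_zero] at h3
      exact h3
    have hs := hasDerivAt_iff_tendsto_slope.mp hE
    have hs2 : Tendsto (fun hbar : ℂ =>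
        (Complex.exp hbar - Complex.exp (-hbar)) / hbar) (𝓝[≠] (0:ℂ)) (𝓝 2) := by
      refine hs.congr' ?_
      filter_upwards [self_mem_nhdsWithin] with s hs0
      simp [slope_def_field]
    have hpow := hs2.pow 2
    norm_num at hpow
    refine hpow.congr ?_
    intro x; rw [div_pow]
  have hT2 : Tendsto (fun hbar : ℂ =>
      hbar ^ 2 / (Complex.exp hbar - Complex.exp (-hbar)) ^ 2) (𝓝[≠] (0:ℂ)) (𝓝 4⁻¹) := by
    have := hT1.inv₀ (by norm_num)
    refine this.congr ?_
    intro x; rw [inv_div]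
  have hT3 : ∀ j, Tendsto (fun hbar : ℂ =>
      (φ j (2 * hbar) - f z - (2 * hbar) * D j) / (2 * hbar) ^ 2) (𝓝[≠] (0:ℂ))
      (𝓝 (pd2 j f z / 2)) := by
    intro j
    have ht := taylor2C (φ j) (hφdiff j)
    rw [hdd j] at ht
    have hmul : Tendsto (fun hbar : ℂ => 2 * hbar) (𝓝[≠] (0:ℂ)) (𝓝[≠] (0:ℂ)) := by
      rw [tendsto_nhdsWithin_iff]
      constructor
      · have h4 : Tendsto (fun hbar : ℂ => 2 * hbar) (𝓝 (0:ℂ)) (𝓝 (2 * 0)) :=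
          (continuous_const.mul continuous_id).tendsto 0
        simpa using h4.mono_left nhdsWithin_le_nhds
      · filter_upwards [self_mem_nhdsWithin] with x hx
        simp only [Set.mem_compl_iff, Set.mem_singleton_iff] at hx ⊢
        exact mul_ne_zero two_ne_zero hx
    have hc := ht.comp hmul
    refine hc.congr ?_
    intro x
    simp only [Function.comp, hφ0 j, hderiv0 j]
  set c : Fin N → ℂ := fun i =>
    (if (i : ℕ) = N - 1 then K else 1) * Complex.exp (z i - z (i + 1)) with hc
  have hT4 : Tendsto (fun hbar : ℂ =>
      ∑ i : Fin N, c i * f (z + hbar • v i + hbar • v (i + 1))) (𝓝[≠] (0:ℂ))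
      (𝓝 ((∑ i : Fin N, c i) * f z)) := by
    have hcont : Continuous (fun hbar : ℂ =>
        ∑ i : Fin N, c i * f (z + hbar • v i + hbar • v (i + 1))) := by
      refine continuous_finset_sum _ fun i _ => ?_
      exact continuous_const.mul (hf.continuous.comp (by continuity))
    have h5 : Tendsto _ (𝓝[≠] (0:ℂ)) _ := (hcont.tendsto 0).mono_left nhdsWithin_le_nhds
    have hval : ∑ i : Fin N, c i * f (z + (0:ℂ) • v i + (0:ℂ) • v (i + 1))
        = (∑ i : Fin N, c i) * f z := by
      simp [Finset.sum_mul]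
    rw [hval] at h5
    exact h5
  have hSum : Tendsto (fun hbar : ℂ =>
      ∑ j, (φ j (2 * hbar) - f z - (2 * hbar) * D j) / (2 * hbar) ^ 2) (𝓝[≠] (0:ℂ))
      (𝓝 (∑ j, pd2 j f z / 2)) :=
    tendsto_finset_sum _ fun j _ => hT3 j
  have hG : Tendsto (fun hbar : ℂ =>
      (∑ j, (φ j (2 * hbar) - f z - (2 * hbar) * D j) / (2 * hbar) ^ 2) * 4 *
        (hbar ^ 2 / (Complex.exp hbar - Complex.exp (-hbar)) ^ 2)
      - ∑ i : Fin N, c i * f (z + hbar • v i + hbar • v (i + 1))) (𝓝[≠] (0:ℂ))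
      (𝓝 ((∑ j, pd2 j f z / 2) * 4 * 4⁻¹ - (∑ i : Fin N, c i) * f z)) :=
    ((hSum.mul_const 4).mul hT2).sub hT4
  have hlim : (∑ j, pd2 j f z / 2) * 4 * 4⁻¹ - (∑ i : Fin N, c i) * f z
      = (1 / 2) * ∑ j : Fin N, pd2 j f z - (∑ i : Fin N, c i) * f z := by
    rw [← Finset.sum_div]
    ring
  rw [hlim] at hG
  refine hG.congr' ?_
  have hne := hT1.eventually_ne (by norm_num : (4:ℂ) ≠ 0)
  filter_upwards [self_mem_nhdsWithin, hne] with hbar h0 hq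
  have hb0 : hbar ≠ 0 := h0
  have hg0 : (Complex.exp hbar - Complex.exp (-hbar)) ^ 2 ≠ 0 := by
    intro h; apply hq; rw [h]; simp
  have key : ∑ j, (φ j (2 * hbar) - f z - (2 * hbar) * D j)
      = (∑ j, φ j (2 * hbar)) - N * f z := by
    rw [Finset.sum_sub_distrib, Finset.sum_sub_distrib, ← Finset.mul_sum, hDsum, mul_zero,
      sub_zero, Finset.sum_const, Finset.card_univ, Fintype.card_fin, nsmul_eq_mul]
  have hA : ∑ j : Fin N, f (z + (2 * hbar) • v j) = ∑ j, φ j (2 * hbar) := rfl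
  show (∑ j, (φ j (2 * hbar) - f z - (2 * hbar) * D j) / (2 * hbar) ^ 2) * 4 *
        (hbar ^ 2 / (Complex.exp hbar - Complex.exp (-hbar)) ^ 2)
      - ∑ i : Fin N, c i * f (z + hbar • v i + hbar • v (i + 1))
    = ((∑ j : Fin N, f (z + (2 * hbar) • v j))
        - (Complex.exp hbar - Complex.exp (-hbar)) ^ 2 *
            ∑ i : Fin N, c i * f (z + hbar • v i + hbar • v (i + 1))
        - N * f z) / (Complex.exp hbar - Complex.exp (-hbar)) ^ 2
  rw [hA, ← Finset.sum_div, key]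
  generalize (Complex.exp hbar - Complex.exp (-hbar)) ^ 2 = E at hg0 ⊢
  field_simp
  ring
end

section
/- Let H_T(k) = −½Δ + k(k−1) ∑_{α>0} sinh^{-2}(α(h)) be the trigonometric Calogero–Moser operator for a simple Lie algebra g. Substitute k = ½e^P and h = −½x + Pρ, so that the coefficient function of each positive root α becomes k(k−1) sinh^{-2}(−½α(x) + P(α,ρ)) = e^{P}(e^P − 2)·(1/4)sinh^{-2}(−½α(x) + P(α,ρ)). Then lim_{P→+∞} k(k−1) sinh^{-2}(−½α(x) + P(α,ρ)) = e^{α(x)} if (α,ρ) = 1 (i.e. α simple), and = 0 if (α,ρ) > 1. -/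
open Filter Topology


lemma key_eq (P y : ℝ) (hy : 0 < y) :
    ((1 / 2) * Real.exp P) * ((1 / 2) * Real.exp P - 1) / (Real.sinh y) ^ 2
    = (Real.exp (2*P - 2*y) - 2 * Real.exp (P - 2*y)) / (1 - Real.exp (-(2*y))) ^ 2 := by
  have hlt : Real.exp (-(2*y)) < 1 := by
    rw [Real.exp_lt_one_iff]; linarith
  have hne : (1 - Real.exp (-(2*y))) ≠ 0 := by linarith
  have hsinh : Real.sinh y = Real.exp y * (1 - Real.exp (-(2*y))) / 2 := by
    rw [Real.sinh_eq, mul_sub, mul_one, ← Real.exp_add]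
    ring_nf
  rw [hsinh]
  have he : ∀ a b : ℝ, Real.exp (a - b) = Real.exp a / Real.exp b := fun a b => Real.exp_sub a b
  rw [he, he]
  have h1 : Real.exp (2*P) = Real.exp P ^ 2 := by rw [← Real.exp_nat_mul]; norm_num
  have h2 : Real.exp (2*y) = Real.exp y ^ 2 := by rw [← Real.exp_nat_mul]; norm_num
  rw [h1, h2]
  have hey : Real.exp y ≠ 0 := Real.exp_ne_zero y
  field_simp

lemma key_tendsto (A c : ℝ) (hc : 1 ≤ c) (L : ℝ)
    (hnum : Tendsto (fun P : ℝ =>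
        Real.exp (2*P - 2*(-(A/2) + P*c)) - 2 * Real.exp (P - 2*(-(A/2) + P*c)))
      atTop (𝓝 L)) :
    Tendsto (fun P : ℝ =>
        ((1 / 2) * Real.exp P) * ((1 / 2) * Real.exp P - 1) /
          (Real.sinh (-(A / 2) + P * c)) ^ 2) atTop (𝓝 L) := by
  have hc0 : (0:ℝ) < c := by linarith
  have hy : Tendsto (fun P : ℝ => -(A/2) + P*c) atTop atTop := by
    apply tendsto_atTop_add_const_left
    exact tendsto_id.atTop_mul_const hc0
  have h1 : Tendsto (fun P : ℝ => -(2*(-(A/2) + P*c))) atTop atBot :=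
    tendsto_neg_atTop_atBot.comp (hy.const_mul_atTop (show (0:ℝ) < 2 by norm_num))
  have hexp0 : Tendsto (fun P : ℝ => Real.exp (-(2*(-(A/2) + P*c)))) atTop (𝓝 0) :=
    Real.tendsto_exp_atBot.comp h1
  have hden : Tendsto (fun P : ℝ => (1 - Real.exp (-(2*(-(A/2) + P*c))))^2) atTop (𝓝 1) := by
    have := ((tendsto_const_nhds (x := (1:ℝ))).sub hexp0).pow 2
    simpa using this
  have hlim := hnum.div hden one_ne_zero
  rw [div_one] at hlim
  apply hlim.congr'
  filter_upwards [hy.eventually_gt_atTop 0] with P hP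
  exact (key_eq P _ hP).symm

/-- The Inozemtsev limit (7.2)–(7.3): after the substitution `k = ½e^P`,
`h = -½x + Pρ`, the coefficient of a positive root `α` in the trigonometric
Calogero–Moser Hamiltonian is `k(k-1) sinh^{-2}(-½α(x) + P(α,ρ))`; with
`A = α(x)` and `c = (α,ρ)`, as `P → +∞` this tends to `e^A` if `c = 1`
(i.e. `α` simple) and to `0` if `c > 1`. -/
theorem statement12 (A c : ℝ) :
    (c = 1 →
      Tendsto (fun P : ℝ =>
          ((1 / 2) * Real.exp P) * ((1 / 2) * Real.exp P - 1) /
            (Real.sinh (-(A / 2) + P * c)) ^ 2)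
        atTop (𝓝 (Real.exp A))) ∧
    (1 < c →
      Tendsto (fun P : ℝ =>
          ((1 / 2) * Real.exp P) * ((1 / 2) * Real.exp P - 1) /
            (Real.sinh (-(A / 2) + P * c)) ^ 2)
        atTop (𝓝 0)) := by
  constructor
  · intro hc
    apply key_tendsto A c hc.ge
    have h2 : Tendsto (fun P : ℝ => 2 * Real.exp (P - 2*(-(A/2) + P*c))) atTop (𝓝 0) := by
      have hb : Tendsto (fun P : ℝ => P - 2*(-(A/2) + P*c)) atTop atBot := by
        subst hc
        have : ∀ P : ℝ, P - 2*(-(A/2) + P*1) = A + P * (-1) := fun P => by ring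
        simp only [this]
        exact tendsto_atBot_add_const_left _ _
          (tendsto_id.atTop_mul_const_of_neg (by norm_num))
      simpa using (Real.tendsto_exp_atBot.comp hb).const_mul 2
    have h1 : Tendsto (fun P : ℝ => Real.exp (2*P - 2*(-(A/2) + P*c))) atTop (𝓝 (Real.exp A)) := by
      subst hc
      have : ∀ P : ℝ, 2*P - 2*(-(A/2) + P*1) = A := fun P => by ring
      simp only [this]
      exact tendsto_const_nhds
    simpa using h1.sub h2
  · intro hc
    apply key_tendsto A c hc.le
    have h1 : Tendsto (fun P : ℝ => Real.exp (2*P - 2*(-(A/2) + P*c))) atTop (𝓝 0) := by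
      have hb : Tendsto (fun P : ℝ => 2*P - 2*(-(A/2) + P*c)) atTop atBot := by
        have : ∀ P : ℝ, 2*P - 2*(-(A/2) + P*c) = A + P * (2 - 2*c) := fun P => by ring
        simp only [this]
        exact tendsto_atBot_add_const_left _ _
          (tendsto_id.atTop_mul_const_of_neg (by linarith))
      exact Real.tendsto_exp_atBot.comp hb
    have h2 : Tendsto (fun P : ℝ => 2 * Real.exp (P - 2*(-(A/2) + P*c))) atTop (𝓝 0) := by
      have hb : Tendsto (fun P : ℝ => P - 2*(-(A/2) + P*c)) atTop atBot := by
        have : ∀ P : ℝ, P - 2*(-(A/2) + P*c) = A + P * (1 - 2*c) := fun P => by ring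
        simp only [this]
        exact tendsto_atBot_add_const_left _ _
          (tendsto_id.atTop_mul_const_of_neg (by linarith))
      simpa using (Real.tendsto_exp_atBot.comp hb).const_mul 2
    simpa using h1.sub h2
end

section
/- In U_q(sl_N) acting on the vector representation V = ℂ^N, the central element C_V^s built from simple roots only equals ∑_{j=1}^N q^{N+1-2j} q^{2ω_j} + (q−q^{-1})² ∑_{i=1}^{N-1} q^{N+1-2i} f_i q^{ω_{i+1}} e_i q^{ω_i}; equivalently, the trace over V of (1⊗π_V)(𝓡_s^{21} 𝓡_s (1⊗q^{2ρ})), where 𝓡_s = (∏_i (1 + (q−q^{-1}) e_i ⊗ f_i)) q^{∑ y_i ⊗ y_i}, reduces to this expression because all terms involving products e_{i_1}...e_{i_l}|_V with l > 1 and non-consecutive indices vanish in V. -/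
open Matrix

section Helpers

variable {m : Type*} [Fintype m] [DecidableEq m] {A : Type*} [Ring A]

lemma diag_mul_std (d : m → A) (p q : m) (y : A) :
    Matrix.diagonal d * Matrix.single p q y = Matrix.single p q (d p * y) := by
  ext a b
  rw [Matrix.diagonal_mul]
  by_cases h : p = a ∧ q = b
  · obtain ⟨rfl, rfl⟩ := h; simp
  · rw [Matrix.single_apply_of_ne _ _ _ _ _ h,
      Matrix.single_apply_of_ne _ _ _ _ _ h, mul_zero]

lemma std_mul_diag (d : m → A) (p q : m) (y : A) :
    Matrix.single p q y * Matrix.diagonal d = Matrix.single p q (y * d q) := by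
  ext a b
  rw [Matrix.mul_diagonal]
  by_cases h : p = a ∧ q = b
  · obtain ⟨rfl, rfl⟩ := h; simp
  · rw [Matrix.single_apply_of_ne _ _ _ _ _ h,
      Matrix.single_apply_of_ne _ _ _ _ _ h, zero_mul]

lemma trace_mul_std (M : Matrix m m A) (p q : m) (y : A) :
    Matrix.trace (M * Matrix.single p q y) = M q p * y := by
  rw [Matrix.trace]
  rw [Finset.sum_eq_single q]
  · simp [Matrix.diag]
  · intro b _ hb
    simp [Matrix.diag, Matrix.mul_single_apply_of_ne (hbj := hb)]
  · simp

lemma trace_std (p q : m) (y : A) :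
    Matrix.trace (Matrix.single p q y) = if p = q then y else 0 := by
  by_cases h : p = q
  · subst h
    rw [if_pos rfl, Matrix.trace]
    rw [Finset.sum_eq_single p]
    · simp
    · intro b _ hb
      exact Matrix.single_apply_of_ne _ _ _ _ _ (by tauto)
    · simp
  · rw [if_neg h, Matrix.trace]
    apply Finset.sum_eq_zero
    intro b _
    exact Matrix.single_apply_of_ne _ _ _ _ _ (fun hpq => h (hpq.1.trans hpq.2.symm))

lemma mul_list_sum_eq_zero {R : Type*} [NonUnitalNonAssocSemiring R] (a : R) (t : List R)
    (h : ∀ b ∈ t, a * b = 0) : a * t.sum = 0 := by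
  induction t with
  | nil => simp
  | cons b s ih =>
    rw [List.sum_cons, mul_add, h b (by simp), zero_add]
    exact ih fun x hx => h x (by simp [hx])

lemma prod_one_add {R : Type*} [Ring R] (l : List R)
    (h : l.Pairwise (fun a b => a * b = 0)) :
    (l.map (fun x => 1 + x)).prod = 1 + l.sum := by
  induction l with
  | nil => simp
  | cons a t ih =>
    rw [List.pairwise_cons] at h
    rw [List.map_cons, List.prod_cons, ih h.2, List.sum_cons]
    have ha : a * t.sum = 0 := mul_list_sum_eq_zero a t h.1
    rw [add_mul, one_mul, mul_add, mul_one, ha, add_zero]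
    abel

lemma list_map_sum_apply {n : ℕ} (t : List (Fin n))
    (g : Fin n → Matrix (Fin (n+1)) (Fin (n+1)) A) (p r : Fin (n+1)) :
    (t.map g).sum p r = (t.map (fun i => g i p r)).sum := by
  induction t with
  | nil => simp
  | cons a t ih => simp [Matrix.add_apply, ih]

lemma upper_entry {n : ℕ} (x : Fin n → A) (l : List (Fin n)) :
    ∀ (j k : Fin (n+1)), (k : ℕ) ≤ (j : ℕ) + 1 →
    ((l.map (fun i => (1 : Matrix (Fin (n+1)) (Fin (n+1)) A)
        + Matrix.single i.castSucc i.succ (x i))).prod) j k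
      = ((1 : Matrix (Fin (n+1)) (Fin (n+1)) A)
        + (l.map (fun i => Matrix.single i.castSucc i.succ (x i))).sum) j k := by
  induction l with
  | nil => intro j k _; simp
  | cons a t ih =>
    intro j k hk
    rw [List.map_cons, List.prod_cons, List.map_cons, List.sum_cons]
    rw [add_mul, one_mul, Matrix.add_apply]
    by_cases hj : j = a.castSucc
    · subst hj
      rw [Matrix.single_mul_apply_same]
      have hk2 : (k : ℕ) ≤ (a.succ : ℕ) + 1 := by
        simp only [Fin.coe_castSucc, Fin.val_succ] at hk ⊢
        omega
      rw [ih a.succ k hk2, ih a.castSucc k hk]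
      have hSt : (t.map (fun i => Matrix.single i.castSucc i.succ (x i))).sum a.succ k
          = 0 := by
        rw [list_map_sum_apply]
        apply List.sum_eq_zero
        intro z hz
        rw [List.mem_map] at hz
        obtain ⟨i, _, rfl⟩ := hz
        apply Matrix.single_apply_of_ne
        rintro ⟨h1, h2⟩
        have e1 := congrArg Fin.val h1
        have e2 := congrArg Fin.val h2
        simp only [Fin.coe_castSucc, Fin.val_succ] at e1 e2 hk
        omega
      have hstd : Matrix.single a.castSucc a.succ (x a) a.castSucc k
          = if a.succ = k then x a else 0 := by
        by_cases h : a.succ = k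
        · subst h; simp
        · rw [if_neg h]
          exact Matrix.single_apply_of_ne _ _ _ _ _ (by tauto)
      simp only [Matrix.add_apply, hSt, hstd, add_zero, Matrix.one_apply, mul_ite, mul_one,
        mul_zero]
      abel
    · rw [Matrix.single_mul_apply_of_ne (h := hj)]
      rw [ih j k hk, add_zero]
      simp only [Matrix.add_apply]
      rw [Matrix.single_apply_of_ne _ _ _ _ _ (by tauto)]
      abel

end Helpers


/-- Formula (5.6): for the vector representation `V = ℂ^N` of `U_q(sl_N)`
(`N = n+1`, simple roots indexed by `Fin n`), the central element built from
simple roots only,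
`C_V^s = Tr|_V (1 ⊗ π_V)(𝓡_s^{21} 𝓡_s (1 ⊗ q^{2ρ}))` with
`𝓡_s = (∏_i (1 + (q-q⁻¹) e_i ⊗ f_i)) q^{∑ y_i ⊗ y_i}`, equals
`∑_{j=1}^N q^{N+1-2j} q^{2ω_j} + (q-q⁻¹)² ∑_{i=1}^{N-1} q^{N+1-2i} f_i q^{ω_{i+1}} e_i q^{ω_i}`.

Here everything is computed in matrices over the quantum group `A`: in `V`,
`e_i` acts as `E_{i,i+1}`, `f_i` as `E_{i+1,i}`, `q^{∑ y_i⊗y_i}` as the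
diagonal matrix with entries the Cartan elements `Kel j = q^{ω_j}`, and
`q^{2ρ}` as the diagonal matrix with scalar entries `q^{N+1-2j}`; the trace
over `V` of a matrix over `A` is the sum of its diagonal entries. -/
theorem statement15 (n : ℕ) (A : Type*) [Ring A] [Algebra ℂ A]
    (q : ℂ) (hq : q ≠ 0)
    (e f : Fin n → A) (Kel : Fin (n + 1) → A) :
    Matrix.trace (
      -- `(1 ⊗ π_V)(𝓡_s^{21})`: the product of the factors `1 + (q-q⁻¹) f_i ⊗ e_i|_V`
      ((List.finRange n).map (fun i =>
          (1 : Matrix (Fin (n + 1)) (Fin (n + 1)) A)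
            + Matrix.single i.castSucc i.succ ((q - q⁻¹) • f i))).prod
      -- times `q^{∑ y_i ⊗ y_i}` acting in `V`
      * Matrix.diagonal Kel
      -- `(1 ⊗ π_V)(𝓡_s)`: the product of the factors `1 + (q-q⁻¹) e_i ⊗ f_i|_V`
      * ((List.finRange n).map (fun i =>
          (1 : Matrix (Fin (n + 1)) (Fin (n + 1)) A)
            + Matrix.single i.succ i.castSucc ((q - q⁻¹) • e i))).prod
      * Matrix.diagonal Kel
      -- times `q^{2ρ}` acting in `V`: `v_j ↦ q^{N+1-2j} v_j`
      * Matrix.diagonal (fun j : Fin (n + 1) => (q ^ ((n : ℤ) - 2 * (j : ℕ))) • (1 : A)))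
    = ∑ j : Fin (n + 1), (q ^ ((n : ℤ) - 2 * (j : ℕ))) • (Kel j * Kel j)
      + ((q - q⁻¹) ^ 2) •
          ∑ i : Fin n, (q ^ ((n : ℤ) - 2 * (i : ℕ))) •
            (f i * Kel i.succ * e i * Kel i.castSucc) := by
    classical
  set qp : Fin (n+1) → ℂ := fun j => q ^ ((n : ℤ) - 2 * (j : ℕ)) with hqp
  set Dq : Matrix (Fin (n+1)) (Fin (n+1)) A := Matrix.diagonal (fun j => qp j • (1 : A)) with hDq
  set Sf : Matrix (Fin (n+1)) (Fin (n+1)) A :=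
    ∑ i : Fin n, Matrix.single i.castSucc i.succ ((q - q⁻¹) • f i) with hSf
  set Se : Matrix (Fin (n+1)) (Fin (n+1)) A :=
    ∑ i : Fin n, Matrix.single i.succ i.castSucc ((q - q⁻¹) • e i) with hSe
  -- the lower product collapses
  have hL : ((List.finRange n).map (fun i =>
      (1 : Matrix (Fin (n + 1)) (Fin (n + 1)) A)
        + Matrix.single i.succ i.castSucc ((q - q⁻¹) • e i))).prod = 1 + Se := by
    have hp : (((List.finRange n).map
        (fun i => Matrix.single i.succ i.castSucc ((q - q⁻¹) • e i))).Pairwise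
        (fun a b => a * b = 0)) := by
      rw [List.pairwise_map]
      refine List.Pairwise.imp ?_ (List.pairwise_lt_finRange n)
      intro a b hab
      apply Matrix.single_mul_single_of_ne
      intro hcontra
      have := congrArg Fin.val hcontra
      simp only [Fin.coe_castSucc, Fin.val_succ] at this
      omega
    have key := prod_one_add ((List.finRange n).map
      (fun i => Matrix.single i.succ i.castSucc ((q - q⁻¹) • e i))) hp
    rw [List.map_map] at key
    rw [hSe, Fin.sum_univ_def]
    exact key
  -- the upper product agrees with `1 + Sf` on the needed entries
  set U : Matrix (Fin (n+1)) (Fin (n+1)) A := ((List.finRange n).map (fun i =>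
      (1 : Matrix (Fin (n + 1)) (Fin (n + 1)) A)
        + Matrix.single i.castSucc i.succ ((q - q⁻¹) • f i))).prod with hU
  set R : Matrix (Fin (n+1)) (Fin (n+1)) A := U - (1 + Sf) with hRdef
  have hR : ∀ j k : Fin (n+1), (k : ℕ) ≤ (j : ℕ) + 1 → R j k = 0 := by
    intro j k hk
    have h1 := upper_entry (fun i => (q - q⁻¹) • f i) (List.finRange n) j k hk
    rw [hRdef, Matrix.sub_apply, hU, h1]
    have : Sf = ((List.finRange n).map
        (fun i => Matrix.single i.castSucc i.succ ((q - q⁻¹) • f i))).sum := by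
      rw [hSf, Fin.sum_univ_def]
    rw [this]
    exact sub_self _
  have hUeq : U = 1 + Sf + R := by rw [hRdef]; abel
  rw [hL, hUeq]
  -- compute the right factor `D (1+Se) D Dq`
  set w : Fin n → A := fun i =>
    Kel i.succ * (((q - q⁻¹) • e i) * (Kel i.castSucc * (qp i.castSucc • (1 : A)))) with hw
  set dd : Fin (n+1) → A := fun j => Kel j * (Kel j * (qp j • (1 : A))) with hdd
  simp only [mul_assoc]
  have hX : Matrix.diagonal Kel * ((1 + Se) * (Matrix.diagonal Kel * Dq))
      = Matrix.diagonal dd + ∑ i : Fin n, Matrix.single i.succ i.castSucc (w i) := by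
    rw [hDq, Matrix.diagonal_mul_diagonal, add_mul, one_mul, mul_add]
    congr 1
    · rw [Matrix.diagonal_mul_diagonal]
    · rw [hSe, Finset.sum_mul, Finset.mul_sum]
      refine Finset.sum_congr rfl fun i _ => ?_
      rw [std_mul_diag, diag_mul_std]
  rw [hX]
  -- expand the product and the trace
  simp only [add_mul, one_mul, mul_add, Matrix.trace_add]
  -- term 1 : trace (diagonal dd)
  have t1 : Matrix.trace (Matrix.diagonal dd)
      = ∑ j : Fin (n + 1), qp j • (Kel j * Kel j) := by
    rw [Matrix.trace_diagonal]
    refine Finset.sum_congr rfl fun j _ => ?_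
    rw [hdd]
    simp only [mul_smul_comm, mul_one]
  -- term 2 : trace (∑ E) = 0
  have t2 : Matrix.trace (∑ i : Fin n, Matrix.single i.succ i.castSucc (w i)) = 0 := by
    rw [Matrix.trace_sum]
    refine Finset.sum_eq_zero fun i _ => ?_
    rw [trace_std, if_neg]
    intro h
    have := congrArg Fin.val h
    simp only [Fin.coe_castSucc, Fin.val_succ] at this
    omega
  -- term 3 : trace (Sf * diagonal dd) = 0
  have t3 : Matrix.trace (Sf * Matrix.diagonal dd) = 0 := by
    rw [hSf, Finset.sum_mul, Matrix.trace_sum]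
    refine Finset.sum_eq_zero fun i _ => ?_
    rw [std_mul_diag, trace_std, if_neg]
    intro h
    have := congrArg Fin.val h
    simp only [Fin.coe_castSucc, Fin.val_succ] at this
    omega
  -- term 4 : the cross term
  have t4 : Matrix.trace (Sf * ∑ i : Fin n, Matrix.single i.succ i.castSucc (w i))
      = ((q - q⁻¹) ^ 2) • ∑ i : Fin n, qp i.castSucc •
          (f i * Kel i.succ * e i * Kel i.castSucc) := by
    rw [hSf, Finset.sum_mul, Matrix.trace_sum]
    rw [Finset.smul_sum]
    refine Finset.sum_congr rfl fun i _ => ?_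
    rw [Finset.mul_sum, Matrix.trace_sum]
    rw [Finset.sum_eq_single i]
    · rw [Matrix.single_mul_single_same, trace_std, if_pos rfl, hw]
      simp only [smul_mul_assoc, mul_smul_comm, smul_smul, mul_one, mul_assoc]
      match_scalars
      ring
    · intro b _ hb
      have hne : (i.succ : Fin (n+1)) ≠ b.succ := fun h => hb ((Fin.succ_injective _ h).symm)
      rw [Matrix.single_mul_single_of_ne (h := hne), Matrix.trace_zero]
    · intro h
      exact absurd (Finset.mem_univ i) h
  -- term 5 : trace (R * diagonal dd) = 0
  have t5 : Matrix.trace (R * Matrix.diagonal dd) = 0 := by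
    rw [Matrix.trace]
    refine Finset.sum_eq_zero fun j _ => ?_
    have : (R * Matrix.diagonal dd) j j = R j j * dd j := Matrix.mul_diagonal _ _ _ _
    rw [Matrix.diag, this, hR j j (by omega), zero_mul]
  -- term 6 : trace (R * ∑ E) = 0
  have t6 : Matrix.trace (R * ∑ i : Fin n, Matrix.single i.succ i.castSucc (w i))
      = 0 := by
    rw [Finset.mul_sum, Matrix.trace_sum]
    refine Finset.sum_eq_zero fun i _ => ?_
    rw [trace_mul_std]
    rw [hR i.castSucc i.succ (by simp), zero_mul]
  rw [t1, t2, t3, t4, t5, t6]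
  simp only [add_zero, zero_add]
  simp only [hqp, Fin.coe_castSucc, mul_assoc]
end

section
/- Setting w_i = z_i + 2ħiP and k = P in the Macdonald–Ruijsenaars operator coefficient ∏_{j≠i} (q^{2k} e^{w_i} − e^{w_j})/(e^{w_i} − e^{w_j}), multiplied by q^{-2(i-1)P}, one obtains ∏_{j≠i} (e^{2ħ(i+1)P} e^{z_i} − e^{2ħjP} e^{z_j})/(e^{2ħiP} e^{z_i} − e^{2ħjP} e^{z_j}) · e^{-2ħ(i-1)P}, and as ħP → +∞ (ħ fixed positive real) this coefficient converges to: 1 for i = N, and 1 − e^{z_i − z_{i+1}} for 1 ≤ i ≤ N−1. -/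
open Filter Topology Finset

lemma tendsto_exp_linear18 {a : ℝ} (b : ℝ) (ha : a < 0) :
    Tendsto (fun P : ℝ => Real.exp (a * P + b)) atTop (𝓝 0) :=
  Real.tendsto_exp_atBot.comp
    (tendsto_atBot_add_const_right _ b ((tendsto_const_mul_atBot_of_neg ha).2 tendsto_id))

lemma div_div_div_aux18 (a b t : ℝ) (ht : t ≠ 0) : (a / t) / (b / t) = a / b := by
  rw [div_div_div_comm, div_self ht, div_one]

lemma ratio_norm18 (x y u v t : ℝ) :
    (Real.exp x - Real.exp y) / (Real.exp u - Real.exp v)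
      = (Real.exp (x - t) - Real.exp (y - t)) / (Real.exp (u - t) - Real.exp (v - t)) := by
  rw [Real.exp_sub, Real.exp_sub, Real.exp_sub, Real.exp_sub, ← sub_div, ← sub_div,
    div_div_div_aux18 _ _ _ (Real.exp_ne_zero t)]

/-- The limit computation (7.9)–(7.11): setting `w_i = z_i + 2ħiP` and `k = P`
in the Macdonald–Ruijsenaars coefficient
`q^{-2(i-1)P} ∏_{j≠i} (q^{2k} e^{w_i} − e^{w_j})/(e^{w_i} − e^{w_j})`
(with `q = e^ħ`, `ħ > 0` fixed real) gives
`e^{-2ħ(i-1)P} ∏_{j≠i} (e^{2ħ(i+1)P} e^{z_i} − e^{2ħjP} e^{z_j})/(e^{2ħiP} e^{z_i} − e^{2ħjP} e^{z_j})`,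
which as `P → +∞` converges to `1` for `i = N` and to `1 − e^{z_i − z_{i+1}}`
for `1 ≤ i ≤ N−1`.  (Indices here are `0`-based: `i : Fin N` stands for the
`1`-based index `i+1`.) -/
theorem statement18 (N : ℕ) [NeZero N] (hbar : ℝ) (hpos : 0 < hbar)
    (z : Fin N → ℝ) (i : Fin N) :
    Tendsto (fun P : ℝ =>
        Real.exp (-(2 * hbar * (i : ℕ) * P)) *
          ∏ j ∈ Finset.univ.erase i,
            (Real.exp (2 * hbar * ((i : ℕ) + 2) * P + z i)
                - Real.exp (2 * hbar * ((j : ℕ) + 1) * P + z j)) /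
              (Real.exp (2 * hbar * ((i : ℕ) + 1) * P + z i)
                - Real.exp (2 * hbar * ((j : ℕ) + 1) * P + z j)))
      atTop
      (𝓝 (if (i : ℕ) = N - 1 then 1 else 1 - Real.exp (z i - z (i + 1)))) := by
  have hN : 0 < N := Nat.pos_of_ne_zero (NeZero.ne N)
  set c : ℝ := 2 * hbar with hcdef
  have hcpos : (0:ℝ) < c := by rw [hcdef]; linarith
  set L : Fin N → ℝ := fun j => if (j:ℕ) = (i:ℕ) + 1 then 1 - Real.exp (z i - z j) else 1
    with hL
  set g : Fin N → ℝ → ℝ := fun j P =>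
    Real.exp (-(c * (if (j:ℕ) < (i:ℕ) then (1:ℝ) else 0) * P)) *
      ((Real.exp (c * (((i:ℕ):ℝ) + 2) * P + z i) - Real.exp (c * (((j:ℕ):ℝ) + 1) * P + z j)) /
        (Real.exp (c * (((i:ℕ):ℝ) + 1) * P + z i) - Real.exp (c * (((j:ℕ):ℝ) + 1) * P + z j)))
    with hg
  -- per-factor limits
  have hlim : ∀ j ∈ Finset.univ.erase i, Tendsto (g j) atTop (𝓝 (L j)) := by
    intro j hj
    have hji : j ≠ i := Finset.ne_of_mem_erase hj
    have hjiv : (j:ℕ) ≠ (i:ℕ) := fun h => hji (Fin.ext h)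
    rcases lt_trichotomy ((j:ℕ)) ((i:ℕ)) with hlt | heq | hgt
    · -- j < i
      have hLj : L j = 1 := by simp only [hL]; rw [if_neg (by omega)]
      have hcast : ((j:ℕ):ℝ) < ((i:ℕ):ℝ) := by exact_mod_cast hlt
      have hgeq : g j = fun P =>
          (1 - Real.exp (c * (((j:ℕ):ℝ) - ((i:ℕ):ℝ) - 1) * P + (z j - z i))) /
            (1 - Real.exp (c * (((j:ℕ):ℝ) - ((i:ℕ):ℝ)) * P + (z j - z i))) := by
        funext P
        simp only [hg, if_pos hlt]
        rw [mul_div_assoc', mul_sub, ← Real.exp_add, ← Real.exp_add,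
          ratio_norm18 _ _ _ _ (c * (((i:ℕ):ℝ) + 1) * P + z i),
          show -(c * 1 * P) + (c * (((i:ℕ):ℝ) + 2) * P + z i)
              - (c * (((i:ℕ):ℝ) + 1) * P + z i) = 0 by ring,
          Real.exp_zero,
          show -(c * 1 * P) + (c * (((j:ℕ):ℝ) + 1) * P + z j)
              - (c * (((i:ℕ):ℝ) + 1) * P + z i)
            = c * (((j:ℕ):ℝ) - ((i:ℕ):ℝ) - 1) * P + (z j - z i) by ring,
          show (c * (((i:ℕ):ℝ) + 1) * P + z i) - (c * (((i:ℕ):ℝ) + 1) * P + z i) = 0 by ring,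
          Real.exp_zero,
          show (c * (((j:ℕ):ℝ) + 1) * P + z j) - (c * (((i:ℕ):ℝ) + 1) * P + z i)
            = c * (((j:ℕ):ℝ) - ((i:ℕ):ℝ)) * P + (z j - z i) by ring]
      rw [hgeq, hLj]
      have h1 : c * (((j:ℕ):ℝ) - ((i:ℕ):ℝ) - 1) < 0 := by nlinarith
      have h2 : c * (((j:ℕ):ℝ) - ((i:ℕ):ℝ)) < 0 := by nlinarith
      have hnum : Tendsto (fun P : ℝ =>
          1 - Real.exp (c * (((j:ℕ):ℝ) - ((i:ℕ):ℝ) - 1) * P + (z j - z i))) atTop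
          (𝓝 (1 - 0)) := tendsto_const_nhds.sub (tendsto_exp_linear18 _ h1)
      have hden : Tendsto (fun P : ℝ =>
          1 - Real.exp (c * (((j:ℕ):ℝ) - ((i:ℕ):ℝ)) * P + (z j - z i))) atTop
          (𝓝 (1 - 0)) := tendsto_const_nhds.sub (tendsto_exp_linear18 _ h2)
      simpa only [Pi.div_def, sub_zero, div_one] using hnum.div hden (by norm_num)
    · exact absurd heq hjiv
    · -- i < j
      rcases eq_or_lt_of_le (Nat.succ_le_of_lt hgt) with heq2 | hgt2
      · -- j = i + 1 (as values)
        have heq2' : (j:ℕ) = (i:ℕ) + 1 := heq2.symm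
        have hLj : L j = 1 - Real.exp (z i - z j) := by simp only [hL]; rw [if_pos heq2']
        have hv : ((j:ℕ):ℝ) = ((i:ℕ):ℝ) + 1 := by exact_mod_cast heq2'
        have hgeq : g j = fun P =>
            (1 - Real.exp (z j - z i)) /
              (Real.exp ((-c) * P + 0) - Real.exp (z j - z i)) := by
          funext P
          simp only [hg, if_neg (by omega : ¬ (j:ℕ) < (i:ℕ))]
          rw [show -(c * 0 * P) = 0 by ring, Real.exp_zero, one_mul,
            ratio_norm18 _ _ _ _ (c * (((i:ℕ):ℝ) + 2) * P + z i), hv,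
            show (c * (((i:ℕ):ℝ) + 2) * P + z i) - (c * (((i:ℕ):ℝ) + 2) * P + z i) = 0
              by ring,
            Real.exp_zero,
            show (c * ((((i:ℕ):ℝ)) + 1 + 1) * P + z j) - (c * (((i:ℕ):ℝ) + 2) * P + z i)
              = z j - z i by ring,
            show (c * (((i:ℕ):ℝ) + 1) * P + z i) - (c * (((i:ℕ):ℝ) + 2) * P + z i)
              = (-c) * P + 0 by ring]
        rw [hgeq, hLj]
        have hd : Tendsto (fun P : ℝ =>
            Real.exp ((-c) * P + 0) - Real.exp (z j - z i)) atTop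
            (𝓝 (0 - Real.exp (z j - z i))) :=
          (tendsto_exp_linear18 0 (by linarith)).sub tendsto_const_nhds
        have hne : (0:ℝ) - Real.exp (z j - z i) ≠ 0 := by
          rw [zero_sub, neg_ne_zero]; exact Real.exp_ne_zero _
        have h2 := Tendsto.div (tendsto_const_nhds
          (x := (1 - Real.exp (z j - z i)))) hd hne
        have hval : (1 - Real.exp (z j - z i)) / (0 - Real.exp (z j - z i))
            = 1 - Real.exp (z i - z j) := by
          have hzi := Real.exp_ne_zero (z i)
          have hzj := Real.exp_ne_zero (z j)
          rw [Real.exp_sub, Real.exp_sub]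
          field_simp
          ring
        rw [hval] at h2
        exact h2
      · -- j > i + 1
        have hLj : L j = 1 := by simp only [hL]; rw [if_neg (by omega)]
        have hcast : ((i:ℕ):ℝ) + 1 < ((j:ℕ):ℝ) := by exact_mod_cast hgt2
        have hgeq : g j = fun P =>
            (Real.exp (c * (((i:ℕ):ℝ) + 1 - ((j:ℕ):ℝ)) * P + (z i - z j)) - 1) /
              (Real.exp (c * (((i:ℕ):ℝ) - ((j:ℕ):ℝ)) * P + (z i - z j)) - 1) := by
          funext P
          simp only [hg, if_neg (by omega : ¬ (j:ℕ) < (i:ℕ))]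
          rw [show -(c * 0 * P) = 0 by ring, Real.exp_zero, one_mul,
            ratio_norm18 _ _ _ _ (c * (((j:ℕ):ℝ) + 1) * P + z j),
            show (c * (((j:ℕ):ℝ) + 1) * P + z j) - (c * (((j:ℕ):ℝ) + 1) * P + z j) = 0
              by ring,
            Real.exp_zero,
            show (c * (((i:ℕ):ℝ) + 2) * P + z i) - (c * (((j:ℕ):ℝ) + 1) * P + z j)
              = c * (((i:ℕ):ℝ) + 1 - ((j:ℕ):ℝ)) * P + (z i - z j) by ring,
            show (c * (((i:ℕ):ℝ) + 1) * P + z i) - (c * (((j:ℕ):ℝ) + 1) * P + z j)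
              = c * (((i:ℕ):ℝ) - ((j:ℕ):ℝ)) * P + (z i - z j) by ring]
        rw [hgeq, hLj]
        have h1 : c * (((i:ℕ):ℝ) + 1 - ((j:ℕ):ℝ)) < 0 := by nlinarith
        have h2 : c * (((i:ℕ):ℝ) - ((j:ℕ):ℝ)) < 0 := by nlinarith
        have hnum : Tendsto (fun P : ℝ =>
            Real.exp (c * (((i:ℕ):ℝ) + 1 - ((j:ℕ):ℝ)) * P + (z i - z j)) - 1) atTop
            (𝓝 (0 - 1)) := (tendsto_exp_linear18 _ h1).sub tendsto_const_nhds
        have hden : Tendsto (fun P : ℝ =>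
            Real.exp (c * (((i:ℕ):ℝ) - ((j:ℕ):ℝ)) * P + (z i - z j)) - 1) atTop
            (𝓝 (0 - 1)) := (tendsto_exp_linear18 _ h2).sub tendsto_const_nhds
        simpa only [Pi.div_def, div_self (show (0:ℝ) - 1 ≠ 0 by norm_num)] using hnum.div hden (by norm_num)
  have hmain : Tendsto (fun P : ℝ => ∏ j ∈ Finset.univ.erase i, g j P) atTop
      (𝓝 (∏ j ∈ Finset.univ.erase i, L j)) := tendsto_finset_prod _ hlim
  -- compute the product of limits
  have hsum : ∑ j ∈ Finset.univ.erase i,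
      (if (j:ℕ) < (i:ℕ) then (1:ℝ) else 0) = ((i:ℕ):ℝ) := by
    rw [Finset.sum_erase _ (by simp)]
    rw [Finset.sum_boole]
    have hfil : (Finset.univ.filter fun j : Fin N => (j:ℕ) < (i:ℕ)) = Finset.Iio i := by
      ext j
      simp only [Finset.mem_filter, Finset.mem_univ, true_and, Finset.mem_Iio, Fin.lt_def]
    rw [hfil, Fin.card_Iio]
  have hprodL : ∏ j ∈ Finset.univ.erase i, L j
      = (if (i:ℕ) = N - 1 then 1 else 1 - Real.exp (z i - z (i + 1))) := by
    by_cases hiN : (i:ℕ) = N - 1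
    · rw [if_pos hiN]
      apply Finset.prod_eq_one
      intro j hj
      have := j.isLt
      simp only [hL]
      rw [if_neg (by omega)]
    · rw [if_neg hiN]
      have hilt : (i:ℕ) + 1 < N := by have := i.isLt; omega
      have h1N : 1 < N := Nat.lt_of_le_of_lt (Nat.succ_le_succ (Nat.zero_le _)) hilt
      have hv1 : ((1 : Fin N) : ℕ) = 1 := by rw [Fin.val_one', Nat.mod_eq_of_lt h1N]
      have hval1 : ((i + 1 : Fin N) : ℕ) = (i:ℕ) + 1 := by
        rw [Fin.val_add_eq_of_add_lt (by rw [hv1]; exact hilt), hv1]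
      have hmem : (i + 1 : Fin N) ∈ Finset.univ.erase i := by
        rw [Finset.mem_erase]
        refine ⟨fun h => ?_, Finset.mem_univ _⟩
        have := congrArg Fin.val h
        rw [hval1] at this
        omega
      rw [Finset.prod_eq_single_of_mem (i + 1) hmem (fun b hb hbne => by
        simp only [hL]
        rw [if_neg (fun h => hbne (Fin.ext (by rw [h, hval1])))])]
      simp only [hL]
      rw [if_pos hval1]
  rw [← hprodL]
  apply hmain.congr
  intro P
  simp only [hg]
  rw [Finset.prod_mul_distrib, ← Real.exp_sum]
  congr 2
  calc ∑ j ∈ Finset.univ.erase i, -(c * (if (j:ℕ) < (i:ℕ) then (1:ℝ) else 0) * P)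
      = ∑ j ∈ Finset.univ.erase i,
          (if (j:ℕ) < (i:ℕ) then (1:ℝ) else 0) * (-(c * P)) :=
        Finset.sum_congr rfl (fun j _ => by ring)
    _ = (∑ j ∈ Finset.univ.erase i, if (j:ℕ) < (i:ℕ) then (1:ℝ) else 0) * (-(c * P)) :=
        (Finset.sum_mul _ _ _).symm
    _ = ((i:ℕ):ℝ) * (-(c * P)) := by rw [hsum]
    _ = -(c * ((i:ℕ):ℝ) * P) := by ring
end
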